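/- arXiv:2512.05677 — 2 statements merged into one kernel-verified Lean document; each statement's English description precedes it below -/
import Mathlib

section
/- Let N ≥ 1 be a natural number and let μ be an exchangeable probability measure on Fin N → ℝ, i.e., for every permutation σ of Fin N the pushforward of μ under the map z ↦ z ∘ σ equals μ. Let T : (Fin N → ℝ) → ℝ be measurable and define the permutation p-value p(z) := (1/N!) · |{σ a permutation of Fin N : T(z ∘ σ) ≤ T(z)}|. Then for every α ∈ [0,1], μ({z : p(z) ≤ α}) ≤ α. -/
open MeasureTheory

/-- Permutation p-value of a statistic `T` at data vector `z`. -/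
noncomputable def permPValue (N : ℕ) (T : (Fin N → ℝ) → ℝ) (z : Fin N → ℝ) : ℝ :=
  ((Finset.univ.filter (fun σ : Equiv.Perm (Fin N) => T (z ∘ σ) ≤ T z)).card : ℝ) /
    (Nat.factorial N : ℝ)

/-!
Fix `z` and write `E = {p ≤ α}`. The p-value of the rearrangement `z ∘ σ` is the normalised rank
of `T (z ∘ σ)` among the values `T (z ∘ π)`, so at most `⌊α N!⌋` of the `N!` rearrangements of
`z` lie in `E`. Integrating this count against `μ` and using exchangeability
(`μ (z ∘ σ ∈ E) = μ E` for every `σ`) gives `N! μ E ≤ ⌊α N!⌋ ≤ α N!`.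
-/

open Finset
open scoped ENNReal Nat

theorem card_filter_card_filter_le_le {S β : Type*} [Fintype S] [LinearOrder β]
    (f : S → β) (k : ℕ) : #{s | #{t | f t ≤ f s} ≤ k} ≤ k := by
  classical
  rcases (univ.filter fun s => #{t | f t ≤ f s} ≤ k).eq_empty_or_nonempty with h | h
  · simp [h]
  · obtain ⟨s, hs, hmax⟩ := exists_max_image _ f h
    calc #{s | #{t | f t ≤ f s} ≤ k} ≤ #{t | f t ≤ f s} := card_le_card fun t ht => by
          simpa using hmax t ht
      _ ≤ k := (mem_filter.mp hs).2

theorem ENNReal.natCast_floor_le_ofReal (x : ℝ) : (⌊x⌋₊ : ℝ≥0∞) ≤ ENNReal.ofReal x := by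
  rcases le_total 0 x with hx | hx
  · rw [← ENNReal.ofReal_natCast]
    exact ENNReal.ofReal_le_ofReal (Nat.floor_le hx)
  · simp [Nat.floor_of_nonpos hx]

open scoped Classical in
theorem lintegral_card_filter_mem {Ω G : Type*} [MeasurableSpace Ω] [Fintype G]
    (μ : Measure Ω) {f : G → Ω → Ω} (hf : ∀ g, Measurable (f g)) {E : Set Ω}
    (hE : MeasurableSet E) :
    ∫⁻ ω, (#{g | f g ω ∈ E} : ℝ≥0∞) ∂μ = ∑ g, μ (f g ⁻¹' E) := by
  simp_rw [natCast_card_filter, ← lintegral_indicator_one (hE.preimage (hf _))]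
  rw [← lintegral_finsetSum _ fun g _ => measurable_one.indicator (hE.preimage (hf g))]
  simp [Set.indicator_apply]

open scoped Classical in
theorem card_mul_measure_le_of_card_filter_mem_le {Ω G : Type*} [MeasurableSpace Ω] [Fintype G]
    (μ : Measure Ω) {f : G → Ω → Ω} (hf : ∀ g, Measurable (f g))
    (hμ : ∀ g, μ.map (f g) = μ) {E : Set Ω} (hE : MeasurableSet E) {k : ℕ}
    (hk : ∀ ω, #{g | f g ω ∈ E} ≤ k) :
    Fintype.card G * μ E ≤ k * μ Set.univ :=
  calc Fintype.card G * μ E = ∑ g, μ (f g ⁻¹' E) := by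
        simp [← Measure.map_apply (hf _) hE, hμ]
    _ = ∫⁻ ω, (#{g | f g ω ∈ E} : ℝ≥0∞) ∂μ := (lintegral_card_filter_mem μ hf hE).symm
    _ ≤ ∫⁻ _, (k : ℝ≥0∞) ∂μ := lintegral_mono fun ω => Nat.cast_le.mpr (hk ω)
    _ = k * μ Set.univ := lintegral_const _

theorem measurable_permPValue {N : ℕ} {T : (Fin N → ℝ) → ℝ} (hT : Measurable T) :
    Measurable (permPValue N T) := by
  classical
  unfold permPValue
  simp_rw [natCast_card_filter]
  refine Measurable.div_const (Finset.measurable_sum _ fun σ _ => ?_) _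
  exact Measurable.ite (measurableSet_le (hT.comp (by fun_prop)) hT)
    measurable_const measurable_const

theorem card_le_floor_of_permPValue_le {N : ℕ} {T : (Fin N → ℝ) → ℝ} {z : Fin N → ℝ}
    {α : ℝ} (h : permPValue N T z ≤ α) :
    #{π : Equiv.Perm (Fin N) | T (z ∘ π) ≤ T z} ≤ ⌊α * N !⌋₊ := by
  refine Nat.le_floor ?_
  rwa [permPValue, div_le_iff₀ (by positivity)] at h

theorem card_filter_permPValue_comp_le (N : ℕ) (T : (Fin N → ℝ) → ℝ) (z : Fin N → ℝ) (α : ℝ) :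
    #{σ : Equiv.Perm (Fin N) | permPValue N T (z ∘ σ) ≤ α} ≤ ⌊α * N !⌋₊ := by
  have reindex (σ : Equiv.Perm (Fin N)) :
      #{π : Equiv.Perm (Fin N) | T ((z ∘ σ) ∘ π) ≤ T (z ∘ σ)} =
        #{π : Equiv.Perm (Fin N) | T (z ∘ π) ≤ T (z ∘ σ)} :=
    card_equiv (Equiv.mulLeft σ) (by simp [Function.comp_assoc])
  calc #{σ : Equiv.Perm (Fin N) | permPValue N T (z ∘ σ) ≤ α}
      ≤ #{σ : Equiv.Perm (Fin N) |
          #{π : Equiv.Perm (Fin N) | T (z ∘ π) ≤ T (z ∘ σ)} ≤ ⌊α * N !⌋₊} :=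
        card_le_card <| monotone_filter_right _ fun σ _ h =>
          (reindex σ).symm.le.trans (card_le_floor_of_permPValue_le h)
    _ ≤ ⌊α * N !⌋₊ := card_filter_card_filter_le_le (fun σ : Equiv.Perm (Fin N) => T (z ∘ σ)) _

theorem permutation_test_valid_exchangeable_general
    (N : ℕ)
    (μ : Measure (Fin N → ℝ)) [IsProbabilityMeasure μ]
    (hexch : ∀ σ : Equiv.Perm (Fin N),
      Measure.map (fun z : Fin N → ℝ => z ∘ σ) μ = μ)
    (T : (Fin N → ℝ) → ℝ) (hT : Measurable T)
    (α : ℝ) :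
    μ {z | permPValue N T z ≤ α} ≤ ENNReal.ofReal α := by
  have hE : MeasurableSet {z | permPValue N T z ≤ α} :=
    measurableSet_le (measurable_permPValue hT) measurable_const
  have hcount := card_mul_measure_le_of_card_filter_mem_le μ (fun σ => by fun_prop) hexch hE
    (card_filter_permPValue_comp_le N T · α)
  rw [Fintype.card_perm, Fintype.card_fin, measure_univ, mul_one] at hcount
  have hfac : ((N ! : ℕ) : ℝ≥0∞) ≠ 0 := by exact_mod_cast N.factorial_ne_zero
  refine (ENNReal.mul_le_mul_iff_right hfac (ENNReal.natCast_ne_top _)).mp ?_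
  calc (N ! : ℝ≥0∞) * μ {z | permPValue N T z ≤ α} ≤ ⌊α * N !⌋₊ := hcount
    _ ≤ ENNReal.ofReal (α * N !) := ENNReal.natCast_floor_le_ofReal _
    _ = N ! * ENNReal.ofReal α := by
      rw [ENNReal.ofReal_mul' (by positivity), ENNReal.ofReal_natCast, mul_comm]

/-- Under an exchangeable null distribution, the permutation p-value is a valid p-value. -/
theorem permutation_test_valid_exchangeable
    (N : ℕ) (hN : 1 ≤ N)
    (μ : Measure (Fin N → ℝ)) [IsProbabilityMeasure μ]
    (hexch : ∀ σ : Equiv.Perm (Fin N),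
      Measure.map (fun z : Fin N → ℝ => z ∘ σ) μ = μ)
    (T : (Fin N → ℝ) → ℝ) (hT : Measurable T)
    (α : ℝ) (hα : α ∈ Set.Icc (0 : ℝ) 1) :
    μ {z | permPValue N T z ≤ α} ≤ ENNReal.ofReal α :=
  permutation_test_valid_exchangeable_general N μ hexch T hT α
end

section
/- Let m, n ≥ 1 and let x : Fin m → ℝ and y : Fin n → ℝ be two samples. For f : ℝ → ℝ set D(f) := (1/m)·∑_i f(x_i) − (1/n)·∑_j f(y_j). Then the infimum of D(f) over all monotone functions f : ℝ → ℝ with values in [0,1] equals the infimum of D(f) over all monotone functions f : ℝ → ℝ with values in {0,1} (monotone indicator functions). -/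
/-!
For `f` with values in `[0, 1]` the layer-cake formula `f t = ∫₀¹ 1[c ≤ f t] dc` writes `f` as an
average of the indicators of its upper level sets, which are `{0,1}`-valued and monotone when `f`
is. A statistic `f ↦ ∑ i, w i * f (z i)` is linear, so its value at `f` is the same average of its
values at these indicators, hence at least their infimum. Indicators being `[0,1]`-valued gives the
other inequality.
-/

open MeasureTheory Set

noncomputable def upperLevelIndicator {α : Type*} (f : α → ℝ) (c : ℝ) : α → ℝ :=
  {t | c ≤ f t}.indicator 1

section UpperLevelIndicator

variable {α : Type*} (f : α → ℝ)

lemma upperLevelIndicator_apply (c : ℝ) (t : α) :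
    upperLevelIndicator f c t = (Iic (f t)).indicator 1 c := by
  simp [upperLevelIndicator, indicator_apply]

lemma upperLevelIndicator_mem_pair (c : ℝ) (t : α) :
    upperLevelIndicator f c t ∈ ({0, 1} : Set ℝ) := by
  unfold upperLevelIndicator
  by_cases h : c ≤ f t <;> simp [h]

lemma Monotone.upperLevelIndicator [Preorder α] {g : α → ℝ} (hg : Monotone g) (c : ℝ) :
    Monotone (upperLevelIndicator g c) :=
  fun a b hab => by
    rw [upperLevelIndicator_apply, upperLevelIndicator_apply]
    exact indicator_le_indicator_of_subset (Iic_subset_Iic.2 (hg hab)) (fun _ => zero_le_one) c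

lemma integrableOn_upperLevelIndicator (t : α) (s : Set ℝ) (hs : volume s ≠ ⊤) :
    IntegrableOn (fun c => upperLevelIndicator f c t) s := by
  simp_rw [upperLevelIndicator_apply]
  exact (integrableOn_const hs).indicator measurableSet_Iic

/-- Layer-cake formula for a single value in `[0, 1]`. -/
lemma integral_upperLevelIndicator {t : α} (ht : f t ∈ Icc 0 1) :
    ∫ c in Ioc 0 1, upperLevelIndicator f c t = f t := by
  have hIoc : Iic (f t) ∩ Ioc 0 1 = Ioc 0 (f t) := by
    ext c; simp only [mem_inter_iff, mem_Iic, mem_Ioc]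
    exact ⟨fun h => ⟨h.2.1, h.1⟩, fun h => ⟨h.2, h.1, h.2.trans ht.2⟩⟩
  simp_rw [upperLevelIndicator_apply]
  rw [integral_indicator_one measurableSet_Iic, measureReal_restrict_apply measurableSet_Iic,
    hIoc, Real.volume_real_Ioc_of_le ht.1, sub_zero]

end UpperLevelIndicator

section WeightedSum

variable {α ι : Type*} [Fintype ι] (w : ι → ℝ) (z : ι → α)

lemma sum_mul_eq_integral_sum_mul_upperLevelIndicator {f : α → ℝ} (hf : ∀ t, f t ∈ Icc 0 1) :
    ∑ i, w i * f (z i) = ∫ c in Ioc 0 1, ∑ i, w i * upperLevelIndicator f c (z i) := by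
  have hint (i : ι) := integrableOn_upperLevelIndicator f (z i) (Ioc 0 1) measure_Ioc_lt_top.ne
  rw [integral_finsetSum _ fun i _ => (hint i).const_mul (w i)]
  simp_rw [integral_const_mul, integral_upperLevelIndicator f (hf _)]

lemma neg_sum_abs_le_sum_mul {v : ι → ℝ} (hv : ∀ i, v i ∈ Icc 0 1) :
    -∑ i, |w i| ≤ ∑ i, w i * v i := by
  rw [← Finset.sum_neg_distrib]
  refine Finset.sum_le_sum fun i _ => ?_
  have hw : 0 ≤ w i + |w i| := neg_le_iff_add_nonneg.1 (neg_abs_le (w i))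
  nlinarith [mul_nonneg (hv i).1 hw, mul_nonneg (sub_nonneg.2 (hv i).2) (abs_nonneg (w i))]

variable [Preorder α]

def monotoneWeightedSums (S : Set ℝ) : Set ℝ :=
  {r | ∃ f : α → ℝ, Monotone f ∧ (∀ t, f t ∈ S) ∧ r = ∑ i, w i * f (z i)}

lemma monotoneWeightedSums_mono {S T : Set ℝ} (hST : S ⊆ T) :
    monotoneWeightedSums w z S ⊆ monotoneWeightedSums w z T := by
  rintro _ ⟨f, hf, hfS, rfl⟩
  exact ⟨f, hf, fun t => hST (hfS t), rfl⟩

lemma monotoneWeightedSums_pair_subset_Icc :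
    monotoneWeightedSums w z {0, 1} ⊆ monotoneWeightedSums w z (Icc 0 1) :=
  monotoneWeightedSums_mono w z (by simp [insert_subset_iff])

lemma zero_mem_monotoneWeightedSums {S : Set ℝ} (hS : 0 ∈ S) :
    0 ∈ monotoneWeightedSums w z S :=
  ⟨0, monotone_const, fun _ => hS, by simp⟩

lemma bddBelow_monotoneWeightedSums_Icc : BddBelow (monotoneWeightedSums w z (Icc 0 1)) :=
  ⟨-∑ i, |w i|, by
    rintro _ ⟨f, -, hf, rfl⟩
    exact neg_sum_abs_le_sum_mul w fun i => hf (z i)⟩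

lemma sInf_monotoneWeightedSums_pair_le {f : α → ℝ} (hf : Monotone f) (hf01 : ∀ t, f t ∈ Icc 0 1) :
    sInf (monotoneWeightedSums w z {0, 1}) ≤ ∑ i, w i * f (z i) := by
  have hlevel (c : ℝ) :
      sInf (monotoneWeightedSums w z {0, 1}) ≤ ∑ i, w i * upperLevelIndicator f c (z i) :=
    csInf_le
      ((bddBelow_monotoneWeightedSums_Icc w z).mono (monotoneWeightedSums_pair_subset_Icc w z))
      ⟨_, hf.upperLevelIndicator c, upperLevelIndicator_mem_pair f c, rfl⟩
  have hint : IntegrableOn (fun c => ∑ i, w i * upperLevelIndicator f c (z i)) (Ioc 0 1) :=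
    integrable_finsetSum _ fun i _ =>
      (integrableOn_upperLevelIndicator f (z i) (Ioc 0 1) measure_Ioc_lt_top.ne).const_mul (w i)
  rw [sum_mul_eq_integral_sum_mul_upperLevelIndicator w z hf01]
  simpa using setIntegral_ge_of_const_le_real measurableSet_Ioc measure_Ioc_lt_top.ne
    (fun c _ => hlevel c) hint

theorem sInf_monotoneWeightedSums_Icc_eq_pair :
    sInf (monotoneWeightedSums w z (Icc 0 1)) = sInf (monotoneWeightedSums w z {0, 1}) := by
  refine le_antisymm ?_ (le_csInf ⟨0, zero_mem_monotoneWeightedSums w z (by simp)⟩ ?_)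
  · exact csInf_le_csInf (bddBelow_monotoneWeightedSums_Icc w z)
      ⟨0, zero_mem_monotoneWeightedSums w z (by simp)⟩ (monotoneWeightedSums_pair_subset_Icc w z)
  · rintro _ ⟨f, hf, hf01, rfl⟩
    exact sInf_monotoneWeightedSums_pair_le w z hf hf01

end WeightedSum

theorem fsd_statistic_indicator_reduction_general
    (m n : ℕ)
    (x : Fin m → ℝ) (y : Fin n → ℝ) :
    sInf {r : ℝ | ∃ f : ℝ → ℝ, Monotone f ∧ (∀ t, f t ∈ Set.Icc (0 : ℝ) 1) ∧
        r = (1 / m) * ∑ i, f (x i) - (1 / n) * ∑ j, f (y j)} =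
      sInf {r : ℝ | ∃ f : ℝ → ℝ, Monotone f ∧ (∀ t, f t ∈ ({0, 1} : Set ℝ)) ∧
        r = (1 / m) * ∑ i, f (x i) - (1 / n) * ∑ j, f (y j)} := by
  have hsplit (f : ℝ → ℝ) : (1 / m) * ∑ i, f (x i) - (1 / n) * ∑ j, f (y j) =
      ∑ k, Sum.elim (fun _ => (1 / m : ℝ)) (fun _ => -(1 / n)) k * f (Sum.elim x y k) := by
    simp [Fintype.sum_sum_type, Finset.mul_sum, sub_eq_add_neg]
  simp_rw [hsplit]
  exact sInf_monotoneWeightedSums_Icc_eq_pair _ _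

/-- The two-sample FSD test statistic takes the same value whether the infimum
runs over all isotone `[0,1]`-valued utility functions or over all isotone
indicator (`{0,1}`-valued) functions. -/
theorem fsd_statistic_indicator_reduction
    (m n : ℕ) (hm : 1 ≤ m) (hn : 1 ≤ n)
    (x : Fin m → ℝ) (y : Fin n → ℝ) :
    sInf {r : ℝ | ∃ f : ℝ → ℝ, Monotone f ∧ (∀ t, f t ∈ Set.Icc (0 : ℝ) 1) ∧
        r = (1 / m) * ∑ i, f (x i) - (1 / n) * ∑ j, f (y j)} =
      sInf {r : ℝ | ∃ f : ℝ → ℝ, Monotone f ∧ (∀ t, f t ∈ ({0, 1} : Set ℝ)) ∧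
        r = (1 / m) * ∑ i, f (x i) - (1 / n) * ∑ j, f (y j)} :=
  fsd_statistic_indicator_reduction_general m n x y
end
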